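/- Let N ≥ 3, 2 + 4/N < q < 2*, γ_q = N(q-2)/(2q), and suppose 0 < σ₂ and 0 < σ₃ < (q-2)N(1-σ₂)/2 - 2. Let A = ‖∇u‖² > 0, B = ‖u‖_{L^{2*}}^{2*} ≥ 0, D = ‖u‖_{L^q}^q ≥ 0, and let s̃₁ ∈ ℝ satisfy (1-σ₂) e^{2s̃₁} A - e^{2*s̃₁} B = μγ_q e^{qγ_q s̃₁} D with μ > 0. Then (2+σ₃) e^{2s̃₁} A - 2* e^{2*s̃₁} B - μqγ_q² e^{qγ_q s̃₁} D ≤ (2+σ₃ - qγ_q(1-σ₂)) e^{2s̃₁} A + (qγ_q - 2*) e^{2*s̃₁} B < 0. -/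
import Mathlib


theorem stmt_8 {N : ℕ} (hN : 3 ≤ N) (q γ μ σ₂ σ₃ A B D st : ℝ)
    (hq : 2 + 4 / (N : ℝ) < q) (hq' : q < 2 * (N : ℝ) / ((N : ℝ) - 2))
    (hγ : γ = (N : ℝ) * (q - 2) / (2 * q))
    (hσ₂ : 0 < σ₂) (hσ₃ : 0 < σ₃) (hσ₃' : σ₃ < (q - 2) * (N : ℝ) * (1 - σ₂) / 2 - 2)
    (hμ : 0 < μ) (hA : 0 < A) (hB : 0 ≤ B) (hD : 0 ≤ D)
    (hzero : (1 - σ₂) * Real.exp (2 * st) * A - Real.exp ((2 * (N : ℝ) / ((N : ℝ) - 2)) * st) * B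
      = μ * γ * Real.exp (q * γ * st) * D) :
    (2 + σ₃) * Real.exp (2 * st) * A
        - (2 * (N : ℝ) / ((N : ℝ) - 2)) * Real.exp ((2 * (N : ℝ) / ((N : ℝ) - 2)) * st) * B
        - μ * q * γ ^ 2 * Real.exp (q * γ * st) * D
      ≤ (2 + σ₃ - q * γ * (1 - σ₂)) * Real.exp (2 * st) * A
        + (q * γ - 2 * (N : ℝ) / ((N : ℝ) - 2)) * Real.exp ((2 * (N : ℝ) / ((N : ℝ) - 2)) * st) * B ∧
    (2 + σ₃ - q * γ * (1 - σ₂)) * Real.exp (2 * st) * A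
        + (q * γ - 2 * (N : ℝ) / ((N : ℝ) - 2)) * Real.exp ((2 * (N : ℝ) / ((N : ℝ) - 2)) * st) * B < 0 := by
  have hN3 : (3 : ℝ) ≤ (N : ℝ) := by exact_mod_cast hN
  have hN2 : (0 : ℝ) < (N : ℝ) - 2 := by linarith
  have hN0 : (0 : ℝ) < (N : ℝ) := by linarith
  have hq0 : (0 : ℝ) < q := by
    have : 0 < 4 / (N : ℝ) := by positivity
    linarith
  have hqγ : q * γ = (N : ℝ) * (q - 2) / 2 := by
    rw [hγ]; field_simp
  have hq2 : q * ((N : ℝ) - 2) < 2 * (N : ℝ) := (lt_div_iff₀ hN2).mp hq'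
  have h1 : 2 + σ₃ - q * γ * (1 - σ₂) < 0 := by
    rw [hqγ]; nlinarith [hσ₃']
  have h2 : q * γ - 2 * (N : ℝ) / ((N : ℝ) - 2) < 0 := by
    rw [hqγ, sub_neg, lt_div_iff₀ hN2]
    nlinarith [hq2, hN0]
  have hE2 : 0 < Real.exp (2 * st) := Real.exp_pos _
  have hEs : 0 < Real.exp ((2 * (N : ℝ) / ((N : ℝ) - 2)) * st) := Real.exp_pos _
  constructor
  · refine le_of_eq ?_
    linear_combination (q * γ) * hzero
  · have t1 : (2 + σ₃ - q * γ * (1 - σ₂)) * Real.exp (2 * st) * A < 0 :=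
      mul_neg_of_neg_of_pos (mul_neg_of_neg_of_pos h1 hE2) hA
    have t2 : (q * γ - 2 * (N : ℝ) / ((N : ℝ) - 2)) * Real.exp ((2 * (N : ℝ) / ((N : ℝ) - 2)) * st) * B ≤ 0 :=
      mul_nonpos_of_nonpos_of_nonneg (le_of_lt (mul_neg_of_neg_of_pos h2 hEs)) hB
    linarith
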